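/- Toy model adversarial vulnerability: In the setting of the toy model (Y uniform on {±1}, Xʲ ∼ N(ηY,1) i.i.d. for j ≥ 2, w = (0, 1/(p−1),…,1/(p−1)), h(x) = sign(wᵀx)), the ℓ_∞ adversarial accuracy at tolerance ε ≥ η satisfies acc_ε(h) = P( inf_{‖Δ‖_∞ ≤ ε} Y·wᵀ(X+Δ) ≥ 0 ) = P(N(0, 1/(p−1)) ≥ ε − η) ≤ exp(−(p−1)(ε−η)²/2). In particular acc_ε(h) ≤ δ whenever ε ≥ η + √(2·log(1/δ)/(p−1)). -/

import Mathlib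

/-!
Because `w ≥ 0` and `‖w‖₁ = 1`, the worst `ℓ_∞`-perturbation of size `ε` lowers the margin
`Y · wᵀX` by exactly `ε`, so the robust event is `{Y · wᵀX ≥ ε}`. Given `Y = y ∈ {±1}`,
`y · wᵀX` is the average of the `p − 1` independent `N(η, 1)` coordinates `y Xʲ` (the first
feature has weight `0`), hence has law `N(η, 1/(p−1))` whatever `y` is. The exponential bound is
the Chernoff bound for this Gaussian, and the last claim is that bound solved for `ε`.
-/

open MeasureTheory ProbabilityTheory
open scoped ENNReal NNReal

/-- Conditional feature distribution of the toy model given label `y ∈ {±1}`. -/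
noncomputable def toyCond (p : ℕ) (η y : ℝ) : Measure (Fin p → ℝ) :=
  Measure.pi fun j =>
    if (j : ℕ) = 0 then (7 / 10 : ℝ≥0∞) • Measure.dirac y + (3 / 10 : ℝ≥0∞) • Measure.dirac (-y)
    else gaussianReal (η * y) 1

/-- Joint distribution of `(X, Y)` in the toy model, with `Y` uniform on `{±1}`. -/
noncomputable def toyJoint (p : ℕ) (η : ℝ) : Measure ((Fin p → ℝ) × ℝ) :=
  (1 / 2 : ℝ≥0∞) • ((toyCond p η 1).map (fun x => (x, (1 : ℝ)))
    + (toyCond p η (-1)).map (fun x => (x, (-1 : ℝ))))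

/-- The averaging weight vector `w = (0, 1/(p−1), …, 1/(p−1))`. -/
noncomputable def toyW (p : ℕ) : Fin p → ℝ :=
  fun j => if (j : ℕ) = 0 then 0 else 1 / ((p : ℝ) - 1)

namespace ProbabilityTheory

lemma map_sum_pi_gaussianReal {ι : Type*} [Fintype ι] (m : ι → ℝ) (v : ι → ℝ≥0) :
    (Measure.pi fun i ↦ gaussianReal (m i) (v i)).map (fun x ↦ ∑ i, x i)
      = gaussianReal (∑ i, m i) (∑ i, v i) := by
  refine Measure.ext_of_charFun (funext fun t ↦ ?_)
  simp only [charFun_map_sum_pi_eq_prod, Finset.prod_apply, charFun_gaussianReal,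
    ← Complex.exp_sum]
  push_cast
  congr 1
  simp only [Finset.sum_sub_distrib, ← Finset.sum_mul, ← Finset.mul_sum, ← Finset.sum_div]

lemma map_sum_pi_of_map_eq_gaussianReal {ι : Type*} [Fintype ι] {μ : ι → Measure ℝ}
    [∀ i, SigmaFinite (μ i)] {f : ι → ℝ → ℝ} (hf : ∀ i, Measurable (f i))
    {m : ι → ℝ} {v : ι → ℝ≥0} (hμf : ∀ i, (μ i).map (f i) = gaussianReal (m i) (v i)) :
    (Measure.pi μ).map (fun x ↦ ∑ i, f i (x i)) = gaussianReal (∑ i, m i) (∑ i, v i) := by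
  have : ∀ i, SigmaFinite ((μ i).map (f i)) := fun i ↦ by rw [hμf i]; infer_instance
  rw [← map_sum_pi_gaussianReal, ← funext hμf, ← Measure.pi_map_pi fun i ↦ (hf i).aemeasurable,
    Measure.map_map (by fun_prop) (by fun_prop)]
  rfl

lemma gaussianReal_Ici_eq_Ici_sub (m : ℝ) (v : ℝ≥0) (t : ℝ) :
    gaussianReal m v (Set.Ici t) = gaussianReal 0 v (Set.Ici (t - m)) := by
  rw [← zero_add m, ← gaussianReal_map_add_const,
    Measure.map_apply (measurable_add_const _) measurableSet_Ici, zero_add]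
  congr 1
  ext x
  simp

/-- Chernoff bound at the optimal parameter `s / v`; for `v = 0` both sides degenerate to `1`. -/
lemma gaussianReal_real_Ici_add_le (m : ℝ) (v : ℝ≥0) {s : ℝ} (hs : 0 ≤ s) :
    (gaussianReal m v).real (Set.Ici (m + s)) ≤ Real.exp (-s ^ 2 / (2 * v)) := by
  have hchernoff := measure_ge_le_exp_mul_mgf (X := id) (μ := gaussianReal m v) (m + s)
    (div_nonneg hs v.coe_nonneg) (integrable_exp_mul_gaussianReal _)
  rw [mgf_gaussianReal (μ := m) (v := v) Measure.map_id, ← Real.exp_add] at hchernoff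
  refine hchernoff.trans_eq (congrArg Real.exp ?_)
  rcases eq_or_ne (v : ℝ) 0 with hv | hv
  · simp [hv]
  · field_simp
    ring

end ProbabilityTheory

lemma exp_neg_mul_sq_div_two_le {a s δ : ℝ} (ha : 0 < a) (hδ : 0 < δ)
    (hs : √(2 * Real.log (1 / δ) / a) ≤ s) : Real.exp (-a * s ^ 2 / 2) ≤ δ := by
  have hsq : 2 * Real.log (1 / δ) / a ≤ s ^ 2 := (Real.sqrt_le_iff.mp hs).2
  rw [one_div, Real.log_inv, div_le_iff₀ ha] at hsq
  rw [← Real.exp_log hδ, Real.exp_le_exp]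
  linarith

section LInftyPerturbation

variable {ι : Type*} [Fintype ι]

lemma abs_sum_mul_le_of_abs_le (c : ι → ℝ) {Δ : ι → ℝ} {ε : ℝ} (hΔ : ∀ j, |Δ j| ≤ ε) :
    |∑ j, c j * Δ j| ≤ ε * ∑ j, |c j| := by
  rw [Finset.mul_sum]
  refine (Finset.abs_sum_le_sum_abs _ _).trans (Finset.sum_le_sum fun j _ ↦ ?_)
  rw [abs_mul, mul_comm ε]
  exact mul_le_mul_of_nonneg_left (hΔ j) (abs_nonneg _)

lemma forall_iSup_abs_le_margin_nonneg_iff (w x : ι → ℝ) (a : ℝ) {ε : ℝ} (hε : 0 ≤ ε) :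
    (∀ Δ : ι → ℝ, (⨆ j, |Δ j|) ≤ ε → 0 ≤ a * ∑ j, w j * (x j + Δ j)) ↔
      ε * (|a| * ∑ j, |w j|) ≤ a * ∑ j, w j * x j := by
  have hsplit : ∀ Δ : ι → ℝ, a * ∑ j, w j * (x j + Δ j)
      = a * ∑ j, w j * x j + ∑ j, a * w j * Δ j := fun Δ ↦ by
    simp only [mul_add, Finset.sum_add_distrib, Finset.mul_sum, mul_assoc]
  have hℓ₁ : ∑ j, |a * w j| = |a| * ∑ j, |w j| := by simp only [abs_mul, Finset.mul_sum]
  constructor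
  · intro h
    let Δ : ι → ℝ := fun j ↦ if 0 ≤ a * w j then -ε else ε
    have hΔ : ∀ j, a * w j * Δ j = -(ε * |a * w j|) := fun j ↦ by
      by_cases hj : 0 ≤ a * w j
      · simp only [Δ, if_pos hj, abs_of_nonneg hj]; ring
      · simp only [Δ, if_neg hj, abs_of_neg (not_le.mp hj)]; ring
    have hΔε : (⨆ j, |Δ j|) ≤ ε :=
      Real.iSup_le (fun j ↦ by by_cases hj : 0 ≤ a * w j <;> simp [Δ, hj, abs_of_nonneg hε]) hε
    have hworst := h Δ hΔε
    rw [hsplit, Finset.sum_congr rfl fun j _ ↦ hΔ j, Finset.sum_neg_distrib,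
      ← Finset.mul_sum, hℓ₁] at hworst
    linarith
  · intro h Δ hΔ
    have hΔj : ∀ j, |Δ j| ≤ ε := fun j ↦ (le_ciSup (Finite.bddAbove_range _) j).trans hΔ
    have hperturb := abs_sum_mul_le_of_abs_le (fun j ↦ a * w j) hΔj
    rw [hℓ₁] at hperturb
    rw [hsplit]
    linarith [neg_abs_le (∑ j, a * w j * Δ j)]

end LInftyPerturbation

lemma isProbabilityMeasure_smul_dirac_add_smul_dirac {α : Type*} [MeasurableSpace α]
    {a b : ℝ≥0∞} (hab : a + b = 1) (x y : α) :
    IsProbabilityMeasure (a • Measure.dirac x + b • Measure.dirac y) :=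
  ⟨by simp [hab]⟩

lemma sum_comp_toyW {p : ℕ} (hp : 1 ≤ p) (g : ℝ → ℝ) (hg : g 0 = 0) :
    ∑ j, g (toyW p j) = ((p : ℝ) - 1) * g (1 / ((p : ℝ) - 1)) := by
  obtain ⟨n, rfl⟩ := Nat.exists_eq_add_of_le' hp
  simp [Fin.sum_univ_succ, toyW, hg]

lemma toyCond_map_margin {p : ℕ} (hp : 2 ≤ p) (η : ℝ) {y : ℝ} (hy : y ^ 2 = 1) :
    (toyCond p η y).map (fun x ↦ y * ∑ j, toyW p j * x j)
      = gaussianReal η ((p : ℝ≥0) - 1)⁻¹ := by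
  have hp1 : (p : ℝ) - 1 ≠ 0 := by
    rw [sub_ne_zero]; exact_mod_cast (by omega : p ≠ 1)
  have : IsProbabilityMeasure
      ((7 / 10 : ℝ≥0∞) • Measure.dirac y + (3 / 10 : ℝ≥0∞) • Measure.dirac (-y)) :=
    isProbabilityMeasure_smul_dirac_add_smul_dirac
      (by rw [ENNReal.div_add_div_same]; norm_num [ENNReal.div_self]) _ _
  -- The non-Gaussian first feature has weight `0`, so it contributes `N(0, 0) = δ₀`.
  have hmarginal : ∀ j : Fin p, ((if (j : ℕ) = 0
      then (7 / 10 : ℝ≥0∞) • Measure.dirac y + (3 / 10 : ℝ≥0∞) • Measure.dirac (-y)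
      else gaussianReal (η * y) 1).map (y * toyW p j * ·))
      = gaussianReal (y * toyW p j * (η * y)) ((y * toyW p j) ^ 2).toNNReal := by
    intro j
    split_ifs with hj
    · have hw : toyW p j = 0 := if_pos hj
      simp only [hw, mul_zero, zero_mul, Measure.map_const, measure_univ, one_smul]
      simp [gaussianReal_zero_var]
    · rw [gaussianReal_map_const_mul, mul_one, Real.toNNReal_of_nonneg (sq_nonneg _)]
  have hmean : ∑ j, y * toyW p j * (η * y) = η := by
    rw [sum_comp_toyW (by omega) (fun w ↦ y * w * (η * y)) (by simp)]
    field_simp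
    linear_combination η * hy
  have hvar : ∑ j, ((y * toyW p j) ^ 2).toNNReal = ((p : ℝ≥0) - 1)⁻¹ := by
    ext
    push_cast [NNReal.coe_sub (by exact_mod_cast (by omega : 1 ≤ p) : (1 : ℝ≥0) ≤ p),
      Real.coe_toNNReal _ (sq_nonneg _)]
    rw [sum_comp_toyW (by omega) (fun w ↦ (y * w) ^ 2) (by simp)]
    field_simp
    linear_combination hy
  have hsum := map_sum_pi_of_map_eq_gaussianReal (fun j ↦ measurable_const_mul _) hmarginal
  rw [hmean, hvar] at hsum
  rw [← hsum]
  unfold toyCond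
  congr 1
  funext x
  simp only [Finset.mul_sum, mul_assoc]

lemma toyJoint_margin_ge_eq {p : ℕ} (hp : 2 ≤ p) (η ε : ℝ) :
    toyJoint p η {z | ε * |z.2| ≤ z.2 * ∑ j, toyW p j * z.1 j}
      = gaussianReal η ((p : ℝ≥0) - 1)⁻¹ (Set.Ici ε) := by
  have hS : MeasurableSet {z : (Fin p → ℝ) × ℝ | ε * |z.2| ≤ z.2 * ∑ j, toyW p j * z.1 j} :=
    measurableSet_le (by fun_prop) (by fun_prop)
  have hslice : ∀ y : ℝ, |y| = 1 →
      toyCond p η y ((fun x ↦ (x, y)) ⁻¹' {z | ε * |z.2| ≤ z.2 * ∑ j, toyW p j * z.1 j})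
        = gaussianReal η ((p : ℝ≥0) - 1)⁻¹ (Set.Ici ε) := by
    intro y hy
    rw [← toyCond_map_margin hp η (by rw [← sq_abs, hy, one_pow]),
      Measure.map_apply (by fun_prop) measurableSet_Ici]
    congr 1
    ext x
    simp [hy]
  unfold toyJoint
  rw [Measure.smul_apply, Measure.add_apply, Measure.map_apply (by fun_prop) hS,
    Measure.map_apply (by fun_prop) hS, hslice 1 abs_one, hslice (-1) (by simp), smul_eq_mul,
    ← two_mul, ← mul_assoc, one_div, ENNReal.inv_mul_cancel two_ne_zero ENNReal.ofNat_ne_top,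
    one_mul]

/-- Toy-model adversarial vulnerability under the `ℓ_∞` threat model: for `ε ≥ η`,
`acc_ε(h) = P(N(0,1/(p−1)) ≥ ε−η) ≤ exp(−(p−1)(ε−η)²/2)`, and in particular
`acc_ε(h) ≤ δ` whenever `ε ≥ η + √(2 log(1/δ)/(p−1))`. -/
theorem stmt11 (p : ℕ) (hp : 2 ≤ p) (η : ℝ) (hη : 0 < η) (ε : ℝ) (hε : η ≤ ε) :
    (toyJoint p η {z | ∀ Δ : Fin p → ℝ, (⨆ j, |Δ j|) ≤ ε →
        0 ≤ z.2 * ∑ j, toyW p j * (z.1 j + Δ j)}).toReal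
      = (gaussianReal 0 ((p : ℝ≥0) - 1)⁻¹ (Set.Ici (ε - η))).toReal ∧
    (toyJoint p η {z | ∀ Δ : Fin p → ℝ, (⨆ j, |Δ j|) ≤ ε →
        0 ≤ z.2 * ∑ j, toyW p j * (z.1 j + Δ j)}).toReal
      ≤ Real.exp (-((p : ℝ) - 1) * (ε - η) ^ 2 / 2) ∧
    ∀ δ : ℝ, 0 < δ → δ ≤ 1 →
      η + Real.sqrt (2 * Real.log (1 / δ) / ((p : ℝ) - 1)) ≤ ε →
      (toyJoint p η {z | ∀ Δ : Fin p → ℝ, (⨆ j, |Δ j|) ≤ ε →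
          0 ≤ z.2 * ∑ j, toyW p j * (z.1 j + Δ j)}).toReal ≤ δ := by
  have hp1 : (0 : ℝ) < (p : ℝ) - 1 := by
    rw [sub_pos]; exact_mod_cast (by omega : 1 < p)
  have hℓ₁ : ∑ j, |toyW p j| = 1 := by
    rw [sum_comp_toyW (by omega) _ abs_zero, abs_of_pos (by positivity)]
    field_simp
  have hacc : toyJoint p η {z | ∀ Δ : Fin p → ℝ, (⨆ j, |Δ j|) ≤ ε →
      0 ≤ z.2 * ∑ j, toyW p j * (z.1 j + Δ j)}
        = gaussianReal 0 ((p : ℝ≥0) - 1)⁻¹ (Set.Ici (ε - η)) := by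
    simp_rw [forall_iSup_abs_le_margin_nonneg_iff _ _ _ (hη.le.trans hε), hℓ₁, mul_one]
    rw [toyJoint_margin_ge_eq hp, gaussianReal_Ici_eq_Ici_sub]
  have htail : (gaussianReal 0 ((p : ℝ≥0) - 1)⁻¹ (Set.Ici (ε - η))).toReal
      ≤ Real.exp (-((p : ℝ) - 1) * (ε - η) ^ 2 / 2) := by
    have := gaussianReal_real_Ici_add_le 0 ((p : ℝ≥0) - 1)⁻¹ (sub_nonneg.mpr hε)
    rw [zero_add, NNReal.coe_inv, NNReal.coe_sub (by exact_mod_cast (by omega : 1 ≤ p))] at this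
    refine this.trans_eq (congrArg Real.exp ?_)
    rw [NNReal.coe_natCast, NNReal.coe_one]
    field_simp
  rw [hacc]
  refine ⟨rfl, htail, fun δ hδ _ hδε ↦ htail.trans (exp_neg_mul_sq_div_two_le hp1 hδ ?_)⟩
  linarith
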